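/- arXiv:1512.05489 — 3 statements merged into one kernel-verified Lean document; each statement's English description precedes it below -/
import Mathlib

section
/- Let (Ω, ℱ, P) be a probability space and let X : Ω → ℝ be measurable and essentially bounded. Then the conditional value-at-risk of X converges to the essential supremum of X as the level tends to zero from above: the function α ↦ inf_{τ∈ℝ} ( τ + α⁻¹ · ∫ max(X(ω) − τ, 0) dP(ω) ) tends to essSup X as α → 0⁺ (i.e., along the filter of right neighborhoods of 0). -/
/-!
Choosing `τ = essSup X` kills the integral, so `CVaR_α(X) ≤ essSup X`. Conversely, for
`c < essSup X` the event `{c ≤ X}` has positive probability `p`, and Markov's inequality for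
`(X - τ)⁺` at height `c - τ` gives `τ + α⁻¹ E(X - τ)⁺ ≥ c` for every `τ` as soon as `α ≤ p`.
-/

open MeasureTheory Filter Set Topology

noncomputable def cvar {Ω : Type*} [MeasurableSpace Ω] (P : Measure Ω) (X : Ω → ℝ) (α : ℝ) : ℝ :=
  ⨅ τ : ℝ, (τ + α⁻¹ * ∫ ω, max (X ω - τ) 0 ∂P)

theorem measure_le_ne_zero_of_lt_essSup {Ω β : Type*} [MeasurableSpace Ω]
    [ConditionallyCompleteLinearOrder β] {P : Measure Ω} {X : Ω → β} {c : β}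
    (hX : IsCoboundedUnder (· ≤ ·) (ae P) X) (hc : c < essSup X P) :
    P {ω | c ≤ X ω} ≠ 0 := by
  intro h0
  have hle : ∀ᵐ ω ∂P, X ω ≤ c := by
    rw [ae_iff]
    simpa only [not_le] using measure_mono_null (s := {ω | c < X ω}) (fun ω h => le_of_lt h) h0
  exact hc.not_ge (essSup_le_of_ae_le c hle hX)

section

variable {Ω : Type*} [MeasurableSpace Ω] {P : Measure Ω} [IsFiniteMeasure P] {X : Ω → ℝ}

theorem le_add_inv_mul_integral_max_sub (hX : Integrable X P) {α c : ℝ} (hα : 0 < α)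
    (hαc : α ≤ P.real {ω | c ≤ X ω}) (τ : ℝ) :
    c ≤ τ + α⁻¹ * ∫ ω, max (X ω - τ) 0 ∂P := by
  have hint : Integrable (fun ω => max (X ω - τ) 0) P := (hX.sub (integrable_const τ)).pos_part
  have hnonneg : 0 ≤ ∫ ω, max (X ω - τ) 0 ∂P := integral_nonneg fun ω => le_max_right _ _
  rcases le_or_gt c τ with hcτ | hτc
  · have := mul_nonneg (inv_nonneg.mpr hα.le) hnonneg
    linarith
  have hset : {ω | c - τ ≤ max (X ω - τ) 0} = {ω | c ≤ X ω} := by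
    ext ω
    simp only [mem_ofPred_eq, le_max_iff]
    constructor
    · rintro (h | h) <;> linarith
    · exact fun h => Or.inl (by linarith)
  have markov : (c - τ) * P.real {ω | c ≤ X ω} ≤ ∫ ω, max (X ω - τ) 0 ∂P := by
    rw [← hset]
    exact mul_meas_ge_le_integral_of_nonneg (ae_of_all _ fun ω => le_max_right _ _) hint (c - τ)
  have : c - τ ≤ α⁻¹ * ∫ ω, max (X ω - τ) 0 ∂P := by
    rw [le_inv_mul_iff₀ hα]
    nlinarith
  linarith

theorem eventually_cvar_mem_Icc (hX : Integrable X P) {c M : ℝ} (hc : P {ω | c ≤ X ω} ≠ 0)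
    (hM : ∀ᵐ ω ∂P, X ω ≤ M) : ∀ᶠ α in 𝓝[>] 0, cvar P X α ∈ Icc c M := by
  have hp : 0 < P.real {ω | c ≤ X ω} := ENNReal.toReal_pos hc (measure_ne_top P _)
  filter_upwards [Ioo_mem_nhdsGT hp] with α ⟨hα, hαp⟩
  have hlower := le_add_inv_mul_integral_max_sub hX hα hαp.le
  have hbdd : BddBelow (range fun τ => τ + α⁻¹ * ∫ ω, max (X ω - τ) 0 ∂P) :=
    ⟨c, forall_mem_range.mpr hlower⟩
  have hzero : ∫ ω, max (X ω - M) 0 ∂P = 0 :=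
    integral_eq_zero_of_ae (by filter_upwards [hM] with ω h using by simp [h])
  refine ⟨le_ciInf hlower, ?_⟩
  calc cvar P X α ≤ M + α⁻¹ * ∫ ω, max (X ω - M) 0 ∂P := ciInf_le hbdd M
    _ = M := by rw [hzero, mul_zero, add_zero]

end

/-- For a measurable and essentially bounded random variable `X` on a
probability space, the conditional value-at-risk `CVaR_α(X)` tends to the essential
supremum of `X` as `α → 0⁺`. -/
theorem stmt_7 {Ω : Type*} [MeasurableSpace Ω] (P : Measure Ω) [IsProbabilityMeasure P]
    (X : Ω → ℝ) (hmeas : Measurable X) (hbdd : ∃ C : ℝ, ∀ᵐ ω ∂P, |X ω| ≤ C) :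
    Tendsto (fun α : ℝ => ⨅ τ : ℝ, (τ + α⁻¹ * ∫ ω, max (X ω - τ) 0 ∂P))
      (nhdsWithin 0 (Set.Ioi 0)) (nhds (essSup X P)) := by
  obtain ⟨C, hC⟩ := hbdd
  have hX : Integrable X P := .of_bound hmeas.aestronglyMeasurable C hC
  have hle : ∀ᵐ ω ∂P, X ω ≤ essSup X P :=
    ae_le_essSup ⟨C, eventually_map.mpr (hC.mono fun ω h => (abs_le.mp h).2)⟩
  have hcobdd : IsCoboundedUnder (· ≤ ·) (ae P) X :=
    IsBoundedUnder.isCoboundedUnder_le ⟨-C, eventually_map.mpr (hC.mono fun ω h => (abs_le.mp h).1)⟩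
  have hpos {c : ℝ} (hc : c < essSup X P) := measure_le_ne_zero_of_lt_essSup hcobdd hc
  refine tendsto_order.2 ⟨fun a ha => ?_, fun b hb => ?_⟩
  · obtain ⟨c, hac, hc⟩ := exists_between ha
    filter_upwards [eventually_cvar_mem_Icc hX (hpos hc) hle] with α hα using hac.trans_le hα.1
  · filter_upwards [eventually_cvar_mem_Icc hX (hpos (sub_one_lt _)) hle] with α hα
      using hα.2.trans_lt hb
end

section
/- Let K be a nonempty finite index set, let π : K → ℝ satisfy π_k ≥ 0 for all k and Σ_{k∈K} π_k = 1, let v : K → ℝ, and let α ∈ (0, 1]. Then the conditional value-at-risk of the discrete distribution with weights π admits the dual representation inf_{τ∈ℝ} ( τ + α⁻¹ · Σ_{k∈K} π_k · max(v_k − τ, 0) ) = max { α⁻¹ · Σ_{k∈K} ν_k · v_k : ν : K → ℝ, 0 ≤ ν_k ≤ π_k for all k, Σ_{k∈K} ν_k = α }, where the maximum on the right-hand side is attained. -/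
/-!
Weak duality is termwise: for a feasible `ν`, `α⁻¹ ∑ ν v = τ + α⁻¹ ∑ ν (v - τ)` and
`ν (v - τ) ≤ π (v - τ)⁺`. Equality holds for every `k` once `τ` is a value-at-risk, i.e. the mass
strictly above `τ` is at most `α` and the mass at or above `τ` is at least `α`, and `ν` is the
convex combination of the two tails `π 𝟙{v > τ}` and `π 𝟙{v ≥ τ}` of total mass `α`. Such a
`τ` is found among the values of `v` as the largest `v k` whose upper tail `{v ≥ v k}` still
carries mass `α`.
-/

open Finset

section

variable {K : Type*} [Fintype K]

def IsValueAtRisk (π v : K → ℝ) (α τ : ℝ) : Prop :=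
  ∑ k with τ < v k, π k ≤ α ∧ α ≤ ∑ k with τ ≤ v k, π k

theorem exists_isValueAtRisk [Nonempty K] (π v : K → ℝ) {α : ℝ} (hα₀ : 0 ≤ α)
    (hα : α ≤ ∑ k, π k) : ∃ τ, IsValueAtRisk π v α τ := by
  obtain ⟨kmin, -, hkmin⟩ := exists_min_image univ v univ_nonempty
  have hne : ({k | α ≤ ∑ j with v k ≤ v j, π j} : Finset K).Nonempty :=
    ⟨kmin, by simpa [filter_true_of_mem fun j _ => hkmin j (mem_univ j)] using hα⟩
  obtain ⟨k₀, hk₀, hmax⟩ := exists_max_image _ v hne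
  refine ⟨v k₀, ?_, (mem_filter.mp hk₀).2⟩
  by_contra! hlt
  have habove : ({k | v k₀ < v k} : Finset K).Nonempty := by
    by_contra hempty
    rw [not_nonempty_iff_eq_empty.mp hempty, sum_empty] at hlt
    linarith
  obtain ⟨k₁, hk₁, hnext⟩ := exists_min_image _ v habove
  have hk₁lt : v k₀ < v k₁ := (mem_filter.mp hk₁).2
  have htail : ({k | v k₀ < v k} : Finset K) = ({k | v k₁ ≤ v k} : Finset K) := by
    ext k
    simp only [mem_filter_univ]
    exact ⟨fun h => hnext k ((mem_filter_univ k).mpr h), hk₁lt.trans_le⟩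
  have hk₁_heavy : k₁ ∈ ({k | α ≤ ∑ j with v k ≤ v j, π j} : Finset K) := by
    rw [mem_filter_univ, ← htail]
    exact hlt.le
  exact (hmax k₁ hk₁_heavy).not_gt hk₁lt

theorem IsValueAtRisk.exists_dual_weights {π v : K → ℝ} {α τ : ℝ} (hπ : ∀ k, 0 ≤ π k)
    (hτ : IsValueAtRisk π v α τ) :
    ∃ ν : K → ℝ, (∀ k, 0 ≤ ν k ∧ ν k ≤ π k) ∧ ∑ k, ν k = α ∧
      ∀ k, ν k * (v k - τ) = π k * max (v k - τ) 0 := by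
  obtain ⟨a, b, ha, hb, hab, hαab⟩ : α ∈ segment ℝ (∑ k with τ < v k, π k)
      (∑ k with τ ≤ v k, π k) := by
    rw [segment_eq_Icc (hτ.1.trans hτ.2)]
    exact hτ
  refine ⟨fun k => a * (if τ < v k then π k else 0) + b * (if τ ≤ v k then π k else 0),
    fun k => ⟨?_, ?_⟩, ?_, fun k => ?_⟩
  · dsimp only
    split_ifs <;> simp [ha, hb, hπ k, add_nonneg, mul_nonneg]
  · calc _ ≤ a * π k + b * π k := by
          dsimp only
          gcongr <;> split_ifs <;> simp [hπ k]
      _ = π k := by rw [← add_mul, hab, one_mul]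
  · rw [← hαab, sum_add_distrib, ← mul_sum, ← mul_sum, ← sum_filter, ← sum_filter]
    rfl
  · rcases lt_trichotomy τ (v k) with h | rfl | h
    · simp only [if_pos h, if_pos h.le, max_eq_left (sub_nonneg.mpr h.le)]
      rw [← add_mul, hab, one_mul]
    · simp
    · simp [h.not_gt, h.not_ge, (sub_neg.mpr h).le]

theorem inv_mul_sum_mul_eq_add {ν v : K → ℝ} {α : ℝ} (hα : α ≠ 0) (hν : ∑ k, ν k = α) (τ : ℝ) :
    α⁻¹ * ∑ k, ν k * v k = τ + α⁻¹ * ∑ k, ν k * (v k - τ) := by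
  simp only [mul_sub, sum_sub_distrib, ← sum_mul, hν]
  field_simp
  ring

theorem inv_mul_sum_mul_le_cvar {π ν v : K → ℝ} {α : ℝ} (hα : 0 < α)
    (hν : ∀ k, 0 ≤ ν k ∧ ν k ≤ π k) (hνα : ∑ k, ν k = α) (τ : ℝ) :
    α⁻¹ * ∑ k, ν k * v k ≤ τ + α⁻¹ * ∑ k, π k * max (v k - τ) 0 := by
  rw [inv_mul_sum_mul_eq_add hα.ne' hνα τ]
  gcongr τ + α⁻¹ * ?_
  refine sum_le_sum fun k _ => ?_
  calc ν k * (v k - τ) ≤ ν k * max (v k - τ) 0 :=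
        mul_le_mul_of_nonneg_left (le_max_left _ _) (hν k).1
    _ ≤ π k * max (v k - τ) 0 := mul_le_mul_of_nonneg_right (hν k).2 (le_max_right _ _)

end

/-- Dual representation of the conditional value-at-risk of a discrete
distribution with weights `π` at level `α ∈ (0,1]`; the maximum in the dual is attained. -/
theorem stmt_8 {K : Type*} [Fintype K] [Nonempty K]
    (π : K → ℝ) (hπ : ∀ k, 0 ≤ π k) (hsum : ∑ k, π k = 1)
    (v : K → ℝ) (α : ℝ) (hα : α ∈ Set.Ioc (0 : ℝ) 1) :
    ∃ ν : K → ℝ, (∀ k, 0 ≤ ν k ∧ ν k ≤ π k) ∧ (∑ k, ν k = α) ∧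
      (⨅ τ : ℝ, (τ + α⁻¹ * ∑ k, π k * max (v k - τ) 0)) = α⁻¹ * ∑ k, ν k * v k ∧
      ∀ ν' : K → ℝ, (∀ k, 0 ≤ ν' k ∧ ν' k ≤ π k) → (∑ k, ν' k = α) →
        α⁻¹ * ∑ k, ν' k * v k ≤ α⁻¹ * ∑ k, ν k * v k := by
  obtain ⟨hα₀, hα₁⟩ := hα
  obtain ⟨τ, hτ⟩ := exists_isValueAtRisk π v hα₀.le (hsum ▸ hα₁)
  obtain ⟨ν, hν, hνα, hslack⟩ := hτ.exists_dual_weights hπ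
  have hattained : α⁻¹ * ∑ k, ν k * v k = τ + α⁻¹ * ∑ k, π k * max (v k - τ) 0 := by
    rw [inv_mul_sum_mul_eq_add hα₀.ne' hνα τ, sum_congr rfl fun k _ => hslack k]
  refine ⟨ν, hν, hνα, ?_, fun ν' hν' hν'α => ?_⟩
  · rw [hattained]
    refine IsGLB.ciInf_eq (IsLeast.isGLB ⟨⟨τ, rfl⟩, ?_⟩)
    rintro _ ⟨τ', rfl⟩
    exact hattained ▸ inv_mul_sum_mul_le_cvar hα₀ hν hνα τ'
  · exact hattained ▸ inv_mul_sum_mul_le_cvar hα₀ hν' hν'α τ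
end

section
/- Let Y ⊆ ℝ^n be a nonempty set, let a : ℝ^n → ℝ^d and b : ℝ^n → ℝ be arbitrary functions, and define the affinely parameterized hypothesis F_θ(y) = ⟨θ, a(y)⟩ + b(y) for θ ∈ ℝ^d. Fix x ∈ ℝ^n and let Θ ⊆ ℝ^d be a convex set such that for every θ ∈ Θ the infimum m(θ) := inf_{y∈Y} F_θ(y) is finite. Then the bounded rationality loss, namely the map (θ, δ) ↦ max( F_θ(x) − m(θ) − δ, 0 ), is jointly convex on Θ × ℝ. -/
/-!
The optimal value `m θ = inf_{y ∈ Y} F θ y` is a pointwise infimum of functions affine in `θ`,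
hence concave on `Θ`. So `θ ↦ F θ x - m θ` is convex, subtracting `δ` keeps it jointly convex in
`(θ, δ)`, and taking the maximum with `0` preserves convexity.
-/

open scoped RealInnerProductSpace

section

variable {E ι : Type*} [AddCommGroup E] [Module ℝ E] {s : Set E}

theorem ConcaveOn.csInf_image {f : E → ι → ℝ} {Y : Set ι} (hs : Convex ℝ s) (hY : Y.Nonempty)
    (hf : ∀ y ∈ Y, ConcaveOn ℝ s (f · y)) (hbdd : ∀ θ ∈ s, BddBelow (f θ '' Y)) :
    ConcaveOn ℝ s (fun θ => sInf (f θ '' Y)) := by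
  refine ⟨hs, fun θ₁ h₁ θ₂ h₂ t₁ t₂ ht₁ ht₂ ht => le_csInf (hY.image _) ?_⟩
  rintro _ ⟨y, hy, rfl⟩
  calc t₁ • sInf (f θ₁ '' Y) + t₂ • sInf (f θ₂ '' Y)
      ≤ t₁ • f θ₁ y + t₂ • f θ₂ y := by
        gcongr
        · exact csInf_le (hbdd θ₁ h₁) ⟨y, hy, rfl⟩
        · exact csInf_le (hbdd θ₂ h₂) ⟨y, hy, rfl⟩
    _ ≤ f (t₁ • θ₁ + t₂ • θ₂) y := (hf y hy).2 h₁ h₂ ht₁ ht₂ ht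

theorem ConvexOn.max_sub_snd_zero {g : E → ℝ} (hg : ConvexOn ℝ s g) :
    ConvexOn ℝ (s ×ˢ Set.univ) (fun p : E × ℝ => max (g p.1 - p.2) 0) := by
  have hfst : ConvexOn ℝ (s ×ˢ Set.univ) (fun p : E × ℝ => g p.1) := by
    rw [Set.prod_univ]
    exact hg.comp_linearMap (LinearMap.fst ℝ E ℝ)
  have hsnd : ConcaveOn ℝ (s ×ˢ Set.univ) (fun p : E × ℝ => p.2) :=
    (LinearMap.snd ℝ E ℝ).concaveOn (hg.1.prod convex_univ)
  exact (hfst.sub hsnd).sup (convexOn_const 0 hfst.1)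

end

section

variable {V : Type*} [NormedAddCommGroup V] [InnerProductSpace ℝ V] {s : Set V}

theorem concaveOn_inner_add_const (hs : Convex ℝ s) (v : V) (c : ℝ) :
    ConcaveOn ℝ s (fun θ => ⟪θ, v⟫ + c) := by
  simpa only [real_inner_comm, Pi.add_def, innerₛₗ_apply_apply] using
    ((innerₛₗ ℝ v).concaveOn hs).add (concaveOn_const c hs)

theorem convexOn_inner_add_const (hs : Convex ℝ s) (v : V) (c : ℝ) :
    ConvexOn ℝ s (fun θ => ⟪θ, v⟫ + c) := by
  simpa only [real_inner_comm, Pi.add_def, innerₛₗ_apply_apply] using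
    ((innerₛₗ ℝ v).convexOn hs).add (convexOn_const c hs)

end

/-- For an affinely parameterized hypothesis `F θ y = ⟨θ, a y⟩ + b y`, a fixed
response `x`, and a convex search space `Θ` on which `m θ = inf_{y ∈ Y} F θ y` is finite,
the bounded rationality loss `(θ, δ) ↦ max (F θ x − m θ − δ) 0` is jointly convex on
`Θ × ℝ`. -/
theorem stmt_11 {n d : ℕ}
    (Y : Set (EuclideanSpace ℝ (Fin n))) (hY : Y.Nonempty)
    (a : EuclideanSpace ℝ (Fin n) → EuclideanSpace ℝ (Fin d))
    (b : EuclideanSpace ℝ (Fin n) → ℝ)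
    (F : EuclideanSpace ℝ (Fin d) → EuclideanSpace ℝ (Fin n) → ℝ)
    (hF : ∀ θ y, F θ y = ⟪θ, a y⟫ + b y)
    (x : EuclideanSpace ℝ (Fin n))
    (Θ : Set (EuclideanSpace ℝ (Fin d))) (hΘ : Convex ℝ Θ)
    (hbdd : ∀ θ ∈ Θ, BddBelow ((fun y => F θ y) '' Y))
    (m : EuclideanSpace ℝ (Fin d) → ℝ)
    (hm : ∀ θ, m θ = sInf ((fun y => F θ y) '' Y)) :
    ConvexOn ℝ (Θ ×ˢ (Set.univ : Set ℝ))
      (fun p : EuclideanSpace ℝ (Fin d) × ℝ => max (F p.1 x - m p.1 - p.2) 0) := by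
  obtain rfl : F = fun θ y => ⟪θ, a y⟫ + b y := funext₂ hF
  obtain rfl : m = fun θ => sInf ((fun y => ⟪θ, a y⟫ + b y) '' Y) := funext hm
  have hm_concave := ConcaveOn.csInf_image hΘ hY
    (fun y _ => concaveOn_inner_add_const hΘ (a y) (b y)) hbdd
  exact ((convexOn_inner_add_const hΘ (a x) (b x)).sub hm_concave).max_sub_snd_zero
end
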